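/- Let F : ℝᴺ → ℝ be differentiable with β-Lipschitz gradient, satisfying a global Łojasiewicz inequality ‖∇F(x)‖² ≥ 2μ(F(x) − F_min) for some μ > 0, and let x_{k+1} = x_k − α∇F(x_k) with 0 < α ≤ 1/β. Then F(x_k) − F_min ≤ (1 − αμ)^k (F(x_0) − F_min) for all k, so the function values converge linearly to F_min. -/

import Mathlib

/-!
The descent lemma for a `β`-smooth function shows that a gradient step of size
`α ≤ 1/β` decreases `F` by at least `(α/2) ‖∇F‖²`; the Polyak–Łojasiewicz inequality turns
this into the contraction `F(x_{k+1}) - F_min ≤ (1 - αμ) (F(x_k) - F_min)`. If `1 - αμ < 0`, the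
nonnegativity of `F - F_min` along the iterates forces it to vanish there, so the bound
holds trivially.
-/

open scoped RealInnerProductSpace

section Smooth

variable {E : Type*} [NormedAddCommGroup E] [InnerProductSpace ℝ E] [CompleteSpace E]
  {F : E → ℝ}

theorem HasGradientAt.hasDerivAt_comp_add_smul {x v g : E} {t : ℝ}
    (hF : HasGradientAt F g (x + t • v)) :
    HasDerivAt (fun s : ℝ => F (x + s • v)) ⟪g, v⟫ t := by
  have hline : HasDerivAt (fun s : ℝ => x + s • v) v t := by
    simpa using ((hasDerivAt_id t).smul_const v).const_add x
  exact (hF.hasFDerivAt.comp_hasDerivAt t hline).congr_deriv (by simp)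

theorem le_add_inner_gradient_add_of_lipschitz_gradient {β : ℝ} (hF : Differentiable ℝ F)
    (hlip : ∀ x y, ‖gradient F x - gradient F y‖ ≤ β * ‖x - y‖) (x v : E) :
    F (x + v) ≤ F x + ⟪gradient F x, v⟫ + β / 2 * ‖v‖ ^ 2 := by
  have hf : ∀ t, HasDerivAt (fun t : ℝ => F (x + t • v) - t * ⟪gradient F x, v⟫)
      ⟪gradient F (x + t • v) - gradient F x, v⟫ t := fun t => by
    rw [inner_sub_left]
    exact (hF _).hasGradientAt.hasDerivAt_comp_add_smul.sub
      (by simpa using (hasDerivAt_id t).mul_const ⟪gradient F x, v⟫)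
  have hB : ∀ t, HasDerivAt (fun t : ℝ => F x + β / 2 * t ^ 2 * ‖v‖ ^ 2)
      (β * t * ‖v‖ ^ 2) t := fun t =>
    ((((hasDerivAt_pow 2 t).const_mul (β / 2)).mul_const (‖v‖ ^ 2)).const_add
      (F x)).congr_deriv (by rw [Nat.cast_ofNat, Nat.add_one_sub_one, pow_one]; ring)
  have hbound : ∀ t ∈ Set.Ico (0 : ℝ) 1,
      ⟪gradient F (x + t • v) - gradient F x, v⟫ ≤ β * t * ‖v‖ ^ 2 :=
    fun t ht => calc
      _ ≤ ‖gradient F (x + t • v) - gradient F x‖ * ‖v‖ := real_inner_le_norm _ _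
      _ ≤ β * ‖t • v‖ * ‖v‖ := by gcongr; simpa using hlip (x + t • v) x
      _ = β * t * ‖v‖ ^ 2 := by rw [norm_smul, Real.norm_of_nonneg ht.1]; ring
  have := image_le_of_deriv_right_le_deriv_boundary
    (fun t _ => (hf t).continuousAt.continuousWithinAt)
    (fun t _ => (hf t).hasDerivWithinAt) (by simp)
    (fun t _ => (hB t).continuousAt.continuousWithinAt)
    (fun t _ => (hB t).hasDerivWithinAt) hbound (Set.right_mem_Icc.mpr zero_le_one)
  simp only [one_smul, one_mul, one_pow, mul_one] at this
  linarith

theorem apply_sub_smul_gradient_le {β α : ℝ} (hF : Differentiable ℝ F)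
    (hlip : ∀ x y, ‖gradient F x - gradient F y‖ ≤ β * ‖x - y‖) (hα : 0 ≤ α) (hαβ : α * β ≤ 1)
    (x : E) :
    F (x - α • gradient F x) ≤ F x - α / 2 * ‖gradient F x‖ ^ 2 := by
  have hdescent :=
    le_add_inner_gradient_add_of_lipschitz_gradient hF hlip x (-(α • gradient F x))
  rw [← sub_eq_add_neg, inner_neg_right, real_inner_smul_right,
    real_inner_self_eq_norm_sq, norm_neg, norm_smul, Real.norm_of_nonneg hα] at hdescent
  nlinarith [mul_le_of_le_one_left hα hαβ, sq_nonneg ‖gradient F x‖]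

end Smooth

theorem le_geom_of_nonneg {e : ℕ → ℝ} {q : ℝ} (he : ∀ k, 0 ≤ e k)
    (hstep : ∀ k, e (k + 1) ≤ q * e k) (k : ℕ) : e k ≤ q ^ k * e 0 := by
  rcases le_or_gt 0 q with hq | hq
  · exact le_geom hq k fun k _ => hstep k
  · have hzero : ∀ k, e k = 0 := fun k =>
      le_antisymm (nonpos_of_mul_nonneg_right ((he (k + 1)).trans (hstep k)) hq) (he k)
    simp [hzero]

theorem stmt18_general {N : ℕ} (F : EuclideanSpace ℝ (Fin N) → ℝ) (β α μ Fmin : ℝ)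
    (hα1 : 0 < α) (hα2 : α ≤ 1 / β)
    (hdiff : Differentiable ℝ F)
    (hlip : ∀ x y, ‖gradient F x - gradient F y‖ ≤ β * ‖x - y‖)
    (hmin : ∀ x, Fmin ≤ F x)
    (hPL : ∀ x, 2 * μ * (F x - Fmin) ≤ ‖gradient F x‖ ^ 2)
    (x : ℕ → EuclideanSpace ℝ (Fin N))
    (hx : ∀ k, x (k + 1) = x k - α • gradient F (x k)) :
    ∀ k, F (x k) - Fmin ≤ (1 - α * μ) ^ k * (F (x 0) - Fmin) := by
  have hβ : 0 < β := one_div_pos.mp (hα1.trans_le hα2)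
  have hαβ : α * β ≤ 1 := (le_div_iff₀ hβ).mp (by simpa using hα2)
  refine le_geom_of_nonneg (fun k => sub_nonneg.mpr (hmin (x k))) fun k => ?_
  have hdecrease := apply_sub_smul_gradient_le hdiff hlip hα1.le hαβ (x k)
  rw [← hx k] at hdecrease
  linarith [mul_le_mul_of_nonneg_left (hPL (x k)) hα1.le]

theorem stmt18 {N : ℕ} (F : EuclideanSpace ℝ (Fin N) → ℝ) (β α μ Fmin : ℝ)
    (hβ : 0 < β) (hμ : 0 < μ) (hα1 : 0 < α) (hα2 : α ≤ 1 / β)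
    (hdiff : Differentiable ℝ F)
    (hlip : ∀ x y, ‖gradient F x - gradient F y‖ ≤ β * ‖x - y‖)
    (hmin : ∀ x, Fmin ≤ F x)
    (hPL : ∀ x, 2 * μ * (F x - Fmin) ≤ ‖gradient F x‖ ^ 2)
    (x : ℕ → EuclideanSpace ℝ (Fin N))
    (hx : ∀ k, x (k + 1) = x k - α • gradient F (x k)) :
    ∀ k, F (x k) - Fmin ≤ (1 - α * μ) ^ k * (F (x 0) - Fmin) :=
  stmt18_general F β α μ Fmin hα1 hα2 hdiff hlip hmin hPL x hx
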